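/- arXiv:1706.09930 — 4 statements merged into one kernel-verified Lean document; each statement's English description precedes it below -/
import Mathlib

section
/- For every integer K ≥ 1, there exists a unique α > 0 such that Γ(K, α) = α^K e^{-α}, where Γ(K, α) = ∫_α^∞ z^{K-1} e^{-z} dz. Equivalently, α is the unique positive solution of ∑_{k=0}^{K-1} α^k/k! = α^K. -/
/-!
Writing `e_n(x) = ∑_{k<n} x^k/k!`, the function `-e^{-z} e_{n+1}(z)` is a primitive of
`z^n e^{-z}/n!` (its derivative telescopes, since `e_{n+1}' = e_n`) and vanishes at infinity, so
`Γ(n+1, α) = n! e^{-α} e_{n+1}(α)` and the equation `Γ(K, α) = α^K e^{-α}` becomes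
`(K-1)! e_K(α) = α^K`. A polynomial `f` with nonnegative coefficients, positive constant term and
degree `< K` meets `x^K` exactly once on `(0, ∞)`: `f(x)/x^K` is strictly decreasing there, and
`x^K - f(x)` changes sign between `min 1 (f 0)` and `1 + f 1`.
-/

open MeasureTheory Real

/-- Upper incomplete Gamma function `Γ(K, x) = ∫_x^∞ z^(K-1) e^(-z) dz` for integer `K`. -/
noncomputable def Ginc (K : ℕ) (x : ℝ) : ℝ := ∫ z in Set.Ioi x, z ^ (K - 1) * Real.exp (-z)

open Finset Filter Topology
open scoped Nat

noncomputable def expPartialSum (n : ℕ) (x : ℝ) : ℝ := ∑ k ∈ range n, x ^ k / k !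

theorem hasDerivAt_expPartialSum_succ (n : ℕ) (x : ℝ) :
    HasDerivAt (expPartialSum (n + 1)) (expPartialSum n x) x := by
  have hterm (k : ℕ) :
      HasDerivAt (fun z : ℝ => z ^ (k + 1) / (k + 1)!) (x ^ k / k !) x := by
    refine ((hasDerivAt_pow (k + 1) x).div_const _).congr_deriv ?_
    rw [Nat.factorial_succ]
    push_cast
    field_simp
  unfold expPartialSum
  simp_rw [sum_range_succ' _ n]
  simpa using HasDerivAt.fun_sum fun k _ => hterm k

theorem hasDerivAt_neg_exp_neg_mul_expPartialSum (n : ℕ) (x : ℝ) :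
    HasDerivAt (fun z => -(exp (-z) * expPartialSum (n + 1) z)) (x ^ n / n ! * exp (-x)) x := by
  have hexp : HasDerivAt (fun z => exp (-z)) (-exp (-x)) x := by
    simpa using (hasDerivAt_neg x).exp
  refine (hexp.mul (hasDerivAt_expPartialSum_succ n x)).neg.congr_deriv ?_
  rw [expPartialSum, sum_range_succ, ← expPartialSum]
  ring

theorem tendsto_exp_neg_mul_expPartialSum (n : ℕ) :
    Tendsto (fun z => exp (-z) * expPartialSum n z) atTop (𝓝 0) := by
  have hterm (k : ℕ) :
      Tendsto (fun z => (k ! : ℝ)⁻¹ * (z ^ k * exp (-z))) atTop (𝓝 0) := by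
    simpa using (tendsto_pow_mul_exp_neg_atTop_nhds_zero k).const_mul (k ! : ℝ)⁻¹
  convert tendsto_finsetSum (range n) fun k _ => hterm k using 1
  · ext z
    rw [expPartialSum, mul_sum]
    exact sum_congr rfl fun k _ => by ring
  · simp

theorem integrableOn_pow_mul_exp_neg_Ioi (n : ℕ) (a : ℝ) :
    IntegrableOn (fun z => z ^ n * exp (-z)) (Set.Ioi a) := by
  refine integrable_of_isBigO_exp_neg one_half_pos (by fun_prop) ?_
  simpa [mul_comm] using (Real.Gamma_integrand_isLittleO n).isBigO

theorem integral_Ioi_pow_mul_exp_neg (n : ℕ) (a : ℝ) :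
    ∫ z in Set.Ioi a, z ^ n * exp (-z) = n ! * (exp (-a) * expPartialSum (n + 1) a) := by
  have hint : IntegrableOn (fun z => z ^ n / n ! * exp (-z)) (Set.Ioi a) := by
    simpa only [IntegrableOn, div_mul_eq_mul_div] using
      (integrableOn_pow_mul_exp_neg_Ioi n a).div_const (n ! : ℝ)
  have h := integral_Ioi_of_hasDerivAt_of_tendsto'
    (fun x _ => hasDerivAt_neg_exp_neg_mul_expPartialSum n x) hint
    (by simpa using (tendsto_exp_neg_mul_expPartialSum (n + 1)).neg)
  simp_rw [div_mul_eq_mul_div, integral_div, zero_sub, neg_neg] at h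
  rw [← h]
  field_simp

theorem Ginc_succ (n : ℕ) (a : ℝ) :
    Ginc (n + 1) a = exp (-a) * ∑ k ∈ range (n + 1), (n ! : ℝ) * a ^ k / k ! := by
  rw [Ginc, Nat.add_sub_cancel, integral_Ioi_pow_mul_exp_neg, expPartialSum, mul_sum, mul_sum,
    mul_sum]
  exact sum_congr rfl fun k _ => by ring

section PositiveRoot

variable {c : ℕ → ℝ} {K : ℕ}

theorem sum_mul_pow_mul_pow_lt (hc : ∀ k, 0 ≤ c k) (h0 : 0 < c 0) (hK : K ≠ 0) {x y : ℝ}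
    (hx : 0 < x) (hxy : x < y) :
    (∑ k ∈ range K, c k * y ^ k) * x ^ K < (∑ k ∈ range K, c k * x ^ k) * y ^ K := by
  have hy : 0 < y := hx.trans hxy
  have hsplit (z : ℝ) {k : ℕ} (hk : k ∈ range K) : z ^ K = z ^ k * z ^ (K - k) :=
    (pow_mul_pow_sub z (mem_range.1 hk).le).symm
  rw [sum_mul, sum_mul]
  refine sum_lt_sum (fun k hk => ?_) ⟨0, mem_range.2 (Nat.pos_of_ne_zero hK), ?_⟩
  · have hck : 0 ≤ c k * x ^ k * y ^ k := by have := hc k; positivity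
    rw [hsplit x hk, hsplit y hk]
    calc c k * y ^ k * (x ^ k * x ^ (K - k)) = c k * x ^ k * y ^ k * x ^ (K - k) := by ring
      _ ≤ c k * x ^ k * y ^ k * y ^ (K - k) :=
        mul_le_mul_of_nonneg_left (pow_le_pow_left₀ hx.le hxy.le _) hck
      _ = c k * x ^ k * (y ^ k * y ^ (K - k)) := by ring
  · simpa using mul_lt_mul_of_pos_left (pow_lt_pow_left₀ hxy hx.le hK) h0

theorem exists_pos_sum_mul_pow_eq_pow (hc : ∀ k, 0 ≤ c k) (h0 : 0 < c 0) (hK : K ≠ 0) :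
    ∃ x, 0 < x ∧ ∑ k ∈ range K, c k * x ^ k = x ^ K := by
  set f : ℝ → ℝ := fun x => ∑ k ∈ range K, c k * x ^ k
  set a := min 1 (c 0)
  set b := 1 + ∑ k ∈ range K, c k
  have ha : 0 < a := lt_min one_pos h0
  have hb : 1 ≤ b := le_add_of_nonneg_right (sum_nonneg fun k _ => hc k)
  have hab : a ≤ b := (min_le_left _ _).trans hb
  have hga : a ^ K - f a ≤ 0 := by
    have hc0 : c 0 ≤ f a := by
      simpa using single_le_sum (fun k _ => mul_nonneg (hc k) (pow_nonneg ha.le k))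
        (mem_range.2 (Nat.pos_of_ne_zero hK))
    have : a ^ K ≤ a := pow_le_of_le_one ha.le (min_le_left _ _) hK
    linarith [min_le_right 1 (c 0)]
  have hgb : 0 ≤ b ^ K - f b := by
    have : f b ≤ (b - 1) * b ^ (K - 1) := by
      rw [show b - 1 = ∑ k ∈ range K, c k by ring, sum_mul]
      exact sum_le_sum fun k hk => mul_le_mul_of_nonneg_left
        (pow_le_pow_right₀ hb (Nat.le_sub_one_of_lt (mem_range.1 hk))) (hc k)
    have hbK : b ^ K = b * b ^ (K - 1) := by
      rw [← pow_succ', Nat.sub_add_cancel (Nat.pos_of_ne_zero hK)]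
    nlinarith [pow_nonneg (zero_le_one.trans hb) (K - 1)]
  have hcont : ContinuousOn (fun x => x ^ K - f x) (Set.Icc a b) := by fun_prop
  obtain ⟨x, hx, hx0⟩ := intermediate_value_Icc hab hcont ⟨hga, hgb⟩
  exact ⟨x, ha.trans_le hx.1, (sub_eq_zero.1 hx0).symm⟩

theorem existsUnique_pos_sum_mul_pow_eq_pow (hc : ∀ k, 0 ≤ c k) (h0 : 0 < c 0) (hK : K ≠ 0) :
    ∃! x, 0 < x ∧ ∑ k ∈ range K, c k * x ^ k = x ^ K := by
  obtain ⟨x, hx, hxroot⟩ := exists_pos_sum_mul_pow_eq_pow hc h0 hK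
  have not_lt_of_roots {y z : ℝ} (hy : 0 < y) (hyroot : ∑ k ∈ range K, c k * y ^ k = y ^ K)
      (hzroot : ∑ k ∈ range K, c k * z ^ k = z ^ K) : ¬ y < z := fun hlt => by
    have := sum_mul_pow_mul_pow_lt hc h0 hK hy hlt
    rw [hyroot, hzroot, mul_comm] at this
    exact this.false
  exact ⟨x, ⟨hx, hxroot⟩, fun y ⟨hy, hyroot⟩ => le_antisymm
    (not_lt.1 (not_lt_of_roots hx hxroot hyroot)) (not_lt.1 (not_lt_of_roots hy hyroot hxroot))⟩

end PositiveRoot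

/-- for every `K ≥ 1` there is a unique `α > 0` with
`Γ(K, α) = α^K e^{-α}`; equivalently, `α` is the unique positive root of the
polynomial equation `∑_{k=0}^{K-1} (K-1)! α^k/k! = α^K`. -/
theorem stmt8 (K : ℕ) (hK : 1 ≤ K) :
    (∃! α : ℝ, 0 < α ∧ Ginc K α = α ^ K * Real.exp (-α)) ∧
    (∃! α : ℝ, 0 < α ∧
      ∑ k ∈ Finset.range K, (Nat.factorial (K - 1) : ℝ) * α ^ k / (Nat.factorial k : ℝ)
        = α ^ K) := by
  obtain ⟨n, rfl⟩ := Nat.exists_eq_add_of_le' hK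
  have hpoly : ∃! α : ℝ, 0 < α ∧
      ∑ k ∈ range (n + 1), ((n + 1 - 1)! : ℝ) * α ^ k / k ! = α ^ (n + 1) := by
    have hc (k : ℕ) : 0 ≤ ((n + 1 - 1)! : ℝ) / k ! := by positivity
    simpa only [div_mul_eq_mul_div] using
      existsUnique_pos_sum_mul_pow_eq_pow hc (by positivity) n.succ_ne_zero
  refine ⟨(existsUnique_congr fun α => and_congr_right fun _ => ?_).2 hpoly, hpoly⟩
  rw [Ginc_succ, Nat.add_sub_cancel, mul_comm _ (exp (-α))]
  exact mul_right_inj' (exp_ne_zero _)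
end

section
/- Fix an integer K ≥ 1 and let α > 0 satisfy Γ(K, α) = α^K e^{-α}. Then the function f(μ) = μ · Γ(K, μ)/Γ(K) attains its maximum over μ ∈ [0, ∞) at μ = α; i.e., for all μ ≥ 0, μ·Γ(K, μ) ≤ α·Γ(K, α). -/
/-!
The derivative of `f(μ) = μ Γ(K, μ)` is `h(μ) = Γ(K, μ) - μ^K e^{-μ}`, and
`h'(μ) = μ^(K-1) (μ - (K+1)) e^{-μ}`. So `h` decreases on `[0, K+1]` and strictly increases
on `[K+1, ∞)` towards its limit `0`, hence is negative there. The hypothesis says `h(α) = 0`,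
which forces `α < K+1`; then `h ≥ 0` on `[0, α]` and `h ≤ 0` on `[α, ∞)`, so `f` peaks at `α`.
-/

open MeasureTheory Real

open Set Filter Topology

lemma integrableOn_Ioi_pow_mul_exp_neg (n : ℕ) (a : ℝ) :
    IntegrableOn (fun z : ℝ => z ^ n * exp (-z)) (Ioi a) := by
  have hcont : Continuous fun z : ℝ => z ^ n * exp (-z) := by fun_prop
  have hpos : IntegrableOn (fun z : ℝ => z ^ n * exp (-z)) (Ioi 0) :=
    (GammaIntegral_convergent (s := n + 1) (by positivity)).congr_fun
      (fun z _ => by simp [mul_comm]) measurableSet_Ioi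
  refine (hpos.union (hcont.integrableOn_Icc (a := a) (b := 0))).mono_set fun z hz => ?_
  rcases lt_or_ge 0 z with h | h
  exacts [Or.inl h, Or.inr ⟨(mem_Ioi.1 hz).le, h⟩]

namespace Ginc

lemma eq_sub_intervalIntegral (K : ℕ) (x : ℝ) :
    Ginc K x = Ginc K 0 - ∫ t in (0 : ℝ)..x, t ^ (K - 1) * exp (-t) := by
  rw [Ginc, Ginc, ← intervalIntegral.integral_Ioi_sub_Ioi'
    (integrableOn_Ioi_pow_mul_exp_neg _ _) (integrableOn_Ioi_pow_mul_exp_neg _ _), sub_sub_cancel]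

lemma hasDerivAt (K : ℕ) (x : ℝ) : HasDerivAt (Ginc K) (-(x ^ (K - 1) * exp (-x))) x := by
  have h := ((show Continuous fun t : ℝ => t ^ (K - 1) * exp (-t) by fun_prop)
    |>.integral_hasStrictDerivAt 0 x).hasDerivAt.const_sub (Ginc K 0)
  rwa [← funext (eq_sub_intervalIntegral K)] at h

lemma tendsto_atTop (K : ℕ) : Tendsto (Ginc K) atTop (𝓝 0) :=
  tendsto_integral_Ioi_zero tendsto_id

variable {K : ℕ}

lemma hasDerivAt_id_mul (hK : 1 ≤ K) (x : ℝ) :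
    HasDerivAt (fun μ => μ * Ginc K μ) (Ginc K x - x ^ K * exp (-x)) x := by
  refine ((hasDerivAt_id x).mul (hasDerivAt K x)).congr_deriv ?_
  rw [id_eq, ← mul_pow_sub_one (by omega : K ≠ 0)]
  ring

lemma hasDerivAt_sub_pow_mul_exp_neg (hK : 1 ≤ K) (x : ℝ) :
    HasDerivAt (fun μ => Ginc K μ - μ ^ K * exp (-μ))
      (x ^ (K - 1) * (x - (K + 1)) * exp (-x)) x := by
  have hexp : HasDerivAt (fun μ : ℝ => exp (-μ)) (-exp (-x)) x := by
    simpa using (hasDerivAt_neg x).exp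
  refine ((hasDerivAt K x).sub ((hasDerivAt_pow K x).mul hexp)).congr_deriv ?_
  rw [← pow_sub_one_mul (by omega : K ≠ 0)]
  ring

lemma antitoneOn_sub_pow_mul_exp_neg (hK : 1 ≤ K) :
    AntitoneOn (fun μ => Ginc K μ - μ ^ K * exp (-μ)) (Icc 0 (K + 1)) := by
  refine antitoneOn_of_hasDerivWithinAt_nonpos (convex_Icc _ _)
    (fun x _ => (hasDerivAt_sub_pow_mul_exp_neg hK x).continuousAt.continuousWithinAt)
    (fun x _ => (hasDerivAt_sub_pow_mul_exp_neg hK x).hasDerivWithinAt) fun x hx => ?_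
  rw [interior_Icc] at hx
  exact mul_nonpos_of_nonpos_of_nonneg
    (mul_nonpos_of_nonneg_of_nonpos (pow_nonneg hx.1.le _) (by linarith [hx.2])) (exp_pos _).le

lemma strictMonoOn_sub_pow_mul_exp_neg (hK : 1 ≤ K) :
    StrictMonoOn (fun μ => Ginc K μ - μ ^ K * exp (-μ)) (Ici (K + 1)) := by
  refine strictMonoOn_of_hasDerivWithinAt_pos (convex_Ici _)
    (fun x _ => (hasDerivAt_sub_pow_mul_exp_neg hK x).continuousAt.continuousWithinAt)
    (fun x _ => (hasDerivAt_sub_pow_mul_exp_neg hK x).hasDerivWithinAt) fun x hx => ?_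
  rw [interior_Ici, mem_Ioi] at hx
  have hx0 : (0 : ℝ) < x := by linarith [(K.cast_nonneg : (0 : ℝ) ≤ K)]
  exact mul_pos (mul_pos (pow_pos hx0 _) (by linarith)) (exp_pos _)

lemma sub_pow_mul_exp_neg_neg (hK : 1 ≤ K) {x : ℝ} (hx : K + 1 ≤ x) :
    Ginc K x - x ^ K * exp (-x) < 0 := by
  have hlim : Tendsto (fun μ => Ginc K μ - μ ^ K * exp (-μ)) atTop (𝓝 0) := by
    simpa using (tendsto_atTop K).sub (tendsto_pow_mul_exp_neg_atTop_nhds_zero K)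
  refine (strictMonoOn_sub_pow_mul_exp_neg hK hx (mem_Ici.2 (by linarith)) (lt_add_one x)).trans_le
    (ge_of_tendsto hlim ?_)
  filter_upwards [eventually_ge_atTop (x + 1)] with y hy
  exact (strictMonoOn_sub_pow_mul_exp_neg hK).monotoneOn (mem_Ici.2 (by linarith))
    (mem_Ici.2 (by linarith)) hy

lemma lt_of_sub_pow_mul_exp_neg_eq_zero (hK : 1 ≤ K) {α : ℝ}
    (hα : Ginc K α - α ^ K * exp (-α) = 0) : α < K + 1 :=
  lt_of_not_ge fun h => (sub_pow_mul_exp_neg_neg hK h).ne hα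

lemma sub_pow_mul_exp_neg_nonneg (hK : 1 ≤ K) {α x : ℝ}
    (hα : Ginc K α - α ^ K * exp (-α) = 0) (hx : 0 ≤ x) (hxα : x ≤ α) :
    0 ≤ Ginc K x - x ^ K * exp (-x) := by
  have hαK := lt_of_sub_pow_mul_exp_neg_eq_zero hK hα
  exact hα ▸ antitoneOn_sub_pow_mul_exp_neg hK ⟨hx, by linarith⟩ ⟨hx.trans hxα, hαK.le⟩ hxα

lemma sub_pow_mul_exp_neg_nonpos (hK : 1 ≤ K) {α x : ℝ} (hα₀ : 0 ≤ α)
    (hα : Ginc K α - α ^ K * exp (-α) = 0) (hαx : α ≤ x) :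
    Ginc K x - x ^ K * exp (-x) ≤ 0 := by
  rcases le_total x (K + 1) with hxK | hKx
  · exact hα ▸ antitoneOn_sub_pow_mul_exp_neg hK ⟨hα₀, hαx.trans hxK⟩ ⟨hα₀.trans hαx, hxK⟩ hαx
  · exact (sub_pow_mul_exp_neg_neg hK hKx).le

end Ginc

/-- if `Γ(K, α) = α^K e^{-α}` with `α > 0`, then
`μ ↦ μ Γ(K, μ)/Γ(K)` is maximised at `μ = α`. -/
theorem stmt11 (K : ℕ) (hK : 1 ≤ K) (α : ℝ) (hα : 0 < α)
    (hroot : Ginc K α = α ^ K * Real.exp (-α)) :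
    ∀ μ : ℝ, 0 ≤ μ → μ * Ginc K μ ≤ α * Ginc K α := by
  have hcross : Ginc K α - α ^ K * exp (-α) = 0 := sub_eq_zero.2 hroot
  have hderiv := Ginc.hasDerivAt_id_mul hK
  have hmono : MonotoneOn (fun μ => μ * Ginc K μ) (Icc 0 α) := by
    refine monotoneOn_of_hasDerivWithinAt_nonneg (convex_Icc _ _)
      (fun x _ => (hderiv x).continuousAt.continuousWithinAt)
      (fun x _ => (hderiv x).hasDerivWithinAt) fun x hx => ?_
    rw [interior_Icc] at hx
    exact Ginc.sub_pow_mul_exp_neg_nonneg hK hcross hx.1.le hx.2.le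
  have hanti : AntitoneOn (fun μ => μ * Ginc K μ) (Ici α) := by
    refine antitoneOn_of_hasDerivWithinAt_nonpos (convex_Ici _)
      (fun x _ => (hderiv x).continuousAt.continuousWithinAt)
      (fun x _ => (hderiv x).hasDerivWithinAt) fun x hx => ?_
    rw [interior_Ici] at hx
    exact Ginc.sub_pow_mul_exp_neg_nonpos hK hα.le hcross (le_of_lt hx)
  intro μ hμ
  rcases le_total μ α with hμα | hαμ
  · exact hmono ⟨hμ, hμα⟩ ⟨hα.le, le_rfl⟩ hμα
  · exact hanti self_mem_Ici hαμ hαμ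
end

section
/- Define the maximal expected throughput E[T](K) = α_K · Γ(K, α_K) / (K · Γ(K)), where α_K > 0 is the unique solution of Γ(K, α) = α^K e^{-α}. Then lim_{K→∞} E[T](K) = 1. -/
/-!
For `K = n + 1` and `x ≥ 0`, repeated integration by parts gives
`Γ(K, x) = n! e^{-x} ∑_{j ≤ n} x^j / j!`, so `E[T](K) = T_K(α_K)` with
`T_K(x) = x Γ(K, x) / (K Γ(K))`. The equation defining `α_K` says `T_K'(α_K) = 0`, and since
`∑_{j ≤ n} x^{j-K} / j!` is decreasing, `T_K` increases up to `α_K` and decreases after it: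
`α_K` is the maximiser of `T_K` on `[0, ∞)`. Hence `T_K(δK) ≤ E[T](K) ≤ 1` for every `δ < 1`,
where the upper bound holds termwise (`x · x^j / j! ≤ K · x^{j+1} / (j+1)!` for `j < K`).
Finally `T_K(δK) = δ P(Poisson(δK) < K)`, and a Chernoff bound
`P(Poisson(δK) ≥ K) ≤ (δ e^{1-δ})^K` makes this tend to `δ`.
-/

open MeasureTheory Real

open Finset Filter Topology
open scoped Nat

noncomputable def expPartial (K : ℕ) (x : ℝ) : ℝ := ∑ j ∈ range K, x ^ j / j !

/-- `regUpperGamma K x = Γ(K, x) / Γ(K)`, the probability that a Poisson variable of mean `x`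
is less than `K`. -/
noncomputable def regUpperGamma (K : ℕ) (x : ℝ) : ℝ := exp (-x) * expPartial K x

noncomputable def throughput (K : ℕ) (x : ℝ) : ℝ := x * regUpperGamma K x / K

lemma expPartial_succ (K : ℕ) (x : ℝ) : expPartial (K + 1) x = expPartial K x + x ^ K / K ! :=
  sum_range_succ _ _

lemma hasDerivAt_expPartial_succ (K : ℕ) (x : ℝ) :
    HasDerivAt (expPartial (K + 1)) (expPartial K x) x := by
  induction K with
  | zero =>
    rw [show expPartial 1 = fun _ => 1 from funext fun y => by simp [expPartial]]
    simpa [expPartial] using hasDerivAt_const x (1 : ℝ)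
  | succ K ih =>
    have hpow : HasDerivAt (fun y : ℝ => y ^ (K + 1) / (K + 1)!) (x ^ K / K !) x :=
      ((hasDerivAt_pow (K + 1) x).div_const _).congr_deriv <| by
        rw [Nat.factorial_succ]
        push_cast
        field_simp
    rw [show expPartial (K + 2) = fun y => expPartial (K + 1) y + y ^ (K + 1) / (K + 1)! from
      funext fun y => expPartial_succ (K + 1) y, expPartial_succ]
    exact ih.add hpow

lemma hasDerivAt_regUpperGamma_succ (K : ℕ) (x : ℝ) :
    HasDerivAt (regUpperGamma (K + 1)) (-(exp (-x) * (x ^ K / K !))) x := by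
  have hexp : HasDerivAt (fun y => exp (-y)) (-exp (-x)) x := by
    simpa using (hasDerivAt_neg x).exp
  refine (hexp.mul (hasDerivAt_expPartial_succ K x)).congr_deriv ?_
  rw [expPartial_succ]
  ring

lemma tendsto_regUpperGamma_atTop (K : ℕ) : Tendsto (regUpperGamma K) atTop (𝓝 0) := by
  have h := tendsto_finsetSum (range K) fun j _ =>
    (tendsto_pow_mul_exp_neg_atTop_nhds_zero j).div_const (j ! : ℝ)
  simp only [zero_div, sum_const_zero] at h
  refine h.congr fun x => ?_
  rw [regUpperGamma, expPartial, mul_sum]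
  exact sum_congr rfl fun j _ => by ring

lemma Ginc_succ_eq (n : ℕ) {x : ℝ} (hx : 0 ≤ x) :
    Ginc (n + 1) x = n ! * regUpperGamma (n + 1) x := by
  have h := integral_Ioi_of_hasDerivAt_of_nonneg' (a := x) (l := 0)
    (g := fun y => -(n ! * regUpperGamma (n + 1) y)) (g' := fun y => y ^ n * exp (-y))
    (fun y _ => by
      refine ((hasDerivAt_regUpperGamma_succ n y).const_mul (n ! : ℝ)).neg.congr_deriv ?_
      field_simp)
    (fun y hy => by have : 0 ≤ y := hx.trans hy.le; positivity)
    (by simpa using ((tendsto_regUpperGamma_atTop (n + 1)).const_mul (n ! : ℝ)).neg)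
  simpa [Ginc] using h

lemma expPartial_mul_pow_le {x y : ℝ} (hx : 0 ≤ x) (hxy : x ≤ y) (K : ℕ) :
    expPartial K y * x ^ K ≤ expPartial K x * y ^ K := by
  rw [expPartial, expPartial, sum_mul, sum_mul]
  refine sum_le_sum fun j hj => ?_
  obtain ⟨m, rfl⟩ := Nat.exists_eq_add_of_lt (mem_range.1 hj)
  have hy : 0 ≤ y := hx.trans hxy
  calc y ^ j / j ! * x ^ (j + m + 1) = x ^ j / j ! * (y ^ j * x ^ (m + 1)) := by ring
    _ ≤ x ^ j / j ! * (y ^ j * y ^ (m + 1)) := by gcongr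
    _ = x ^ j / j ! * y ^ (j + m + 1) := by ring

lemma isMaxOn_Ici_of_hasDerivAt {f f' : ℝ → ℝ} {a b : ℝ} (hba : b ≤ a)
    (hf : ∀ x, HasDerivAt f (f' x) x) (hinc : ∀ x ∈ Set.Ioo b a, 0 ≤ f' x)
    (hdec : ∀ x ∈ Set.Ioi a, f' x ≤ 0) : IsMaxOn f (Set.Ici b) a := by
  have hcont : Continuous f := continuous_iff_continuousAt.2 fun x => (hf x).continuousAt
  refine isMaxOn_iff.2 fun x (hx : b ≤ x) => ?_
  rcases le_total x a with hxa | hax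
  · exact monotoneOn_of_hasDerivWithinAt_nonneg (convex_Icc b a) hcont.continuousOn
      (fun y _ => (hf y).hasDerivWithinAt) (by simpa using hinc) ⟨hx, hxa⟩ ⟨hba, le_rfl⟩ hxa
  · exact antitoneOn_of_hasDerivWithinAt_nonpos (convex_Ici a) hcont.continuousOn
      (fun y _ => (hf y).hasDerivWithinAt) (by simpa using hdec) Set.self_mem_Ici hax hax

lemma hasDerivAt_throughput_succ (n : ℕ) (x : ℝ) :
    HasDerivAt (throughput (n + 1))
      (exp (-x) * (expPartial (n + 1) x - x ^ (n + 1) / n !) / (n + 1 : ℕ)) x := by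
  refine (((hasDerivAt_id x).mul (hasDerivAt_regUpperGamma_succ n x)).div_const _).congr_deriv ?_
  simp only [regUpperGamma, id]
  ring

lemma isMaxOn_throughput {n : ℕ} {a : ℝ} (ha : 0 < a)
    (hroot : expPartial (n + 1) a = a ^ (n + 1) / n !) :
    IsMaxOn (throughput (n + 1)) (Set.Ici 0) a := by
  have hpow : 0 < a ^ (n + 1) := pow_pos ha _
  refine isMaxOn_Ici_of_hasDerivAt ha.le (hasDerivAt_throughput_succ n) (fun x hx => ?_)
    (fun x hx => ?_)
  · have hratio := expPartial_mul_pow_le hx.1.le hx.2.le (n + 1)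
    rw [hroot, div_mul_comm] at hratio
    have : x ^ (n + 1) / n ! ≤ expPartial (n + 1) x := le_of_mul_le_mul_right hratio hpow
    have := sub_nonneg.2 this
    positivity
  · have hratio := expPartial_mul_pow_le ha.le (Set.mem_Ioi.1 hx).le (n + 1)
    rw [hroot, div_mul_comm] at hratio
    have : expPartial (n + 1) x ≤ x ^ (n + 1) / n ! := le_of_mul_le_mul_right hratio hpow
    exact div_nonpos_of_nonpos_of_nonneg
      (mul_nonpos_of_nonneg_of_nonpos (exp_pos _).le (sub_nonpos.2 this)) (by positivity)

lemma mul_expPartial_le (K : ℕ) {x : ℝ} (hx : 0 ≤ x) : x * expPartial K x ≤ K * exp x := by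
  calc x * expPartial K x = ∑ j ∈ range K, ((j + 1 : ℕ) : ℝ) * (x ^ (j + 1) / (j + 1)!) := by
        rw [expPartial, mul_sum]
        refine sum_congr rfl fun j _ => ?_
        rw [Nat.factorial_succ]
        push_cast
        field_simp
        ring
    _ ≤ ∑ j ∈ range K, (K : ℝ) * (x ^ (j + 1) / (j + 1)!) :=
        sum_le_sum fun j hj => by gcongr; exact_mod_cast mem_range.1 hj
    _ = K * (expPartial (K + 1) x - 1) := by
        rw [← mul_sum, expPartial, sum_range_succ']
        simp
    _ ≤ K * exp x := by
        gcongr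
        exact (sub_le_self _ zero_le_one).trans (sum_le_exp_of_nonneg hx _)

lemma throughput_le_one (K : ℕ) {x : ℝ} (hx : 0 ≤ x) : throughput K x ≤ 1 := by
  rcases K.eq_zero_or_pos with rfl | hK
  · simp [throughput]
  rw [throughput, div_le_one (by positivity), regUpperGamma]
  calc x * (exp (-x) * expPartial K x) = exp (-x) * (x * expPartial K x) := by ring
    _ ≤ exp (-x) * (K * exp x) :=
        mul_le_mul_of_nonneg_left (mul_expPartial_le K hx) (exp_pos _).le
    _ = K := by rw [mul_left_comm, ← exp_add]; simp

lemma exp_sub_expPartial_le (K : ℕ) {x t : ℝ} (hx : 0 ≤ x) (ht : 1 ≤ t) :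
    exp x - expPartial K x ≤ exp (x * t) / t ^ K := by
  have hseries (y : ℝ) :
      HasSum (fun j => y ^ (j + K) / (j + K)!) (exp y - expPartial K y) := by
    rw [exp_eq_exp_ℝ]
    exact (hasSum_nat_add_iff' K).2 (NormedSpace.expSeries_div_hasSum_exp y)
  have hterm (j : ℕ) : x ^ (j + K) / (j + K)! ≤ (x * t) ^ (j + K) / (j + K)! / t ^ K := by
    calc x ^ (j + K) / (j + K)! ≤ x ^ (j + K) / (j + K)! * t ^ j :=
          le_mul_of_one_le_right (by positivity) (one_le_pow₀ ht)
      _ = (x * t) ^ (j + K) / (j + K)! / t ^ K := by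
          rw [mul_pow, pow_add t]
          field_simp
  calc exp x - expPartial K x ≤ (exp (x * t) - expPartial K (x * t)) / t ^ K :=
        hasSum_le hterm (hseries x) ((hseries (x * t)).div_const _)
    _ ≤ exp (x * t) / t ^ K := by
        gcongr
        exact sub_le_self _ (sum_nonneg fun j _ => by positivity)

lemma regUpperGamma_le_one (K : ℕ) {x : ℝ} (hx : 0 ≤ x) : regUpperGamma K x ≤ 1 :=
  calc regUpperGamma K x ≤ exp (-x) * exp x :=
        mul_le_mul_of_nonneg_left (sum_le_exp_of_nonneg hx K) (exp_pos _).le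
    _ = 1 := by rw [← exp_add, neg_add_cancel, exp_zero]

lemma one_sub_pow_le_regUpperGamma_mul {δ : ℝ} (hδ0 : 0 < δ) (hδ1 : δ ≤ 1) (K : ℕ) :
    1 - (δ * exp (1 - δ)) ^ K ≤ regUpperGamma K (δ * K) := by
  have htail := exp_sub_expPartial_le K (x := δ * K) (t := δ⁻¹) (by positivity)
    (one_le_inv₀ hδ0 |>.2 hδ1)
  have hbound : exp (-(δ * K)) * (exp (δ * K * δ⁻¹) / δ⁻¹ ^ K) = (δ * exp (1 - δ)) ^ K :=
    calc exp (-(δ * K)) * (exp (δ * K * δ⁻¹) / δ⁻¹ ^ K) = δ ^ K * exp (-(δ * K) + K) := by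
          rw [show δ * K * δ⁻¹ = K by field_simp, exp_add, inv_pow, div_inv_eq_mul]
          ring
      _ = (δ * exp (1 - δ)) ^ K := by
          rw [show -(δ * K) + K = K * (1 - δ) by ring, exp_nat_mul, mul_pow]
  have := mul_le_mul_of_nonneg_left htail (exp_pos (-(δ * K))).le
  rw [hbound, mul_sub, ← exp_add, neg_add_cancel, exp_zero] at this
  rw [regUpperGamma]
  linarith

lemma tendsto_regUpperGamma_const_mul {δ : ℝ} (hδ0 : 0 < δ) (hδ1 : δ < 1) :
    Tendsto (fun K : ℕ => regUpperGamma K (δ * K)) atTop (𝓝 1) := by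
  have hr : δ * exp (1 - δ) < 1 := by
    have hδexp : δ < exp (δ - 1) := by linarith [add_one_lt_exp (sub_ne_zero.2 hδ1.ne)]
    calc δ * exp (1 - δ) < exp (δ - 1) * exp (1 - δ) := mul_lt_mul_of_pos_right hδexp (exp_pos _)
      _ = 1 := by rw [← exp_add]; simp
  have hlim : Tendsto (fun K : ℕ => 1 - (δ * exp (1 - δ)) ^ K) atTop (𝓝 1) := by
    simpa using tendsto_const_nhds.sub (tendsto_pow_atTop_nhds_zero_of_lt_one (by positivity) hr)
  exact tendsto_of_tendsto_of_tendsto_of_le_of_le hlim tendsto_const_nhds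
    (one_sub_pow_le_regUpperGamma_mul hδ0 hδ1.le) fun K => regUpperGamma_le_one K (by positivity)

lemma tendsto_throughput_const_mul {δ : ℝ} (hδ0 : 0 < δ) (hδ1 : δ < 1) :
    Tendsto (fun K : ℕ => throughput K (δ * K)) atTop (𝓝 δ) := by
  have h := (tendsto_regUpperGamma_const_mul hδ0 hδ1).const_mul δ
  rw [mul_one] at h
  refine h.congr' ?_
  filter_upwards [eventually_ne_atTop 0] with K hK
  rw [throughput]
  field_simp

lemma expPartial_eq_of_Ginc_eq {n : ℕ} {a : ℝ} (ha : 0 ≤ a)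
    (h : Ginc (n + 1) a = a ^ (n + 1) * exp (-a)) : expPartial (n + 1) a = a ^ (n + 1) / n ! := by
  rw [Ginc_succ_eq n ha, regUpperGamma] at h
  field_simp
  nlinarith [exp_pos (-a)]

lemma mul_Ginc_div_eq_throughput (n : ℕ) {a : ℝ} (ha : 0 ≤ a) :
    a * Ginc (n + 1) a / ((n + 1 : ℕ) * (n + 1 - 1)! : ℝ) = throughput (n + 1) a := by
  rw [Ginc_succ_eq n ha, throughput, Nat.add_sub_cancel]
  field_simp

/-- with `α_K` the unique positive root of `Γ(K, α) = α^K e^{-α}`,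
the maximal expected throughput `E[T](K) = α_K Γ(K, α_K)/(K Γ(K))` tends to `1`. -/
theorem stmt14 (α : ℕ → ℝ)
    (hα : ∀ K : ℕ, 1 ≤ K → 0 < α K ∧ Ginc K (α K) = (α K) ^ K * Real.exp (-(α K))) :
    Filter.Tendsto
      (fun K : ℕ => α K * Ginc K (α K) / ((K : ℝ) * (Nat.factorial (K - 1) : ℝ)))
      Filter.atTop (nhds 1) := by
  have hE : ∀ᶠ K : ℕ in atTop,
      throughput K (α K) = α K * Ginc K (α K) / ((K : ℝ) * (Nat.factorial (K - 1) : ℝ)) := by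
    filter_upwards [eventually_ge_atTop 1] with K hK
    obtain ⟨n, rfl⟩ := Nat.exists_eq_add_of_le' hK
    exact (mul_Ginc_div_eq_throughput n (hα _ hK).1.le).symm
  refine (tendsto_congr' hE).1 (tendsto_order.2 ⟨fun b hb => ?_, fun b hb => ?_⟩)
  · obtain ⟨δ, hδ, hδ1⟩ := exists_between (max_lt hb one_pos)
    obtain ⟨hbδ, hδ0⟩ := max_lt_iff.1 hδ
    filter_upwards [(tendsto_throughput_const_mul hδ0 hδ1).eventually (lt_mem_nhds hbδ),
      eventually_ge_atTop 1] with K hlt hK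
    obtain ⟨n, rfl⟩ := Nat.exists_eq_add_of_le' hK
    obtain ⟨hpos, hroot⟩ := hα _ hK
    exact hlt.trans_le <| isMaxOn_throughput hpos (expPartial_eq_of_Ginc_eq hpos.le hroot)
      (Set.mem_Ici.2 (by positivity))
  · filter_upwards [eventually_ge_atTop 1] with K hK
    exact (throughput_le_one K (hα K hK).1.le).trans_lt hb
end

section
/- The sequence α_K defined as the unique positive root of ∑_{k=0}^{K-1} (K−1)!·α^k/k! = α^K is strictly increasing in K and satisfies α_K < K for all K ≥ 2. -/
/-!
Write the defining equation of `α_K` as `x ^ K = ∑_{k<K} c_k x ^ k` with `c_k = (K-1)!/k! ≥ 0`.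
Dividing by `x ^ K`, the right-hand side becomes a sum of nonincreasing functions of `x > 0`,
so on `(0, ∞)` the sign of `x ^ K - ∑ c_k x ^ k` is the sign of `x - α_K`: a root is located by
evaluating the equation at a test point. At `x = K` every term `(K-1)! K^k / k!` is at most
`K ^ (K-1)`, strictly for `k < K-1`, which gives `α_K < K`. At `x = α_K` the right-hand side of
the equation of degree `K + 1` equals `(K + 1) α_K ^ K`, which exceeds `α_K ^ (K+1)` because
`α_K < K + 1`; hence `α_K < α_{K+1}`.
-/

open MeasureTheory Real

open Finset
open scoped Nat

section RootComparison

variable {R : Type*} [CommSemiring R] [LinearOrder R] [IsStrictOrderedRing R]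

theorem pow_mul_pow_le_pow_mul_pow {a b : R} (ha : 0 ≤ a) (hab : a ≤ b) {k n : ℕ}
    (hkn : k ≤ n) : a ^ n * b ^ k ≤ a ^ k * b ^ n := by
  obtain ⟨d, rfl⟩ := Nat.exists_eq_add_of_le hkn
  have hb : 0 ≤ b := ha.trans hab
  calc a ^ (k + d) * b ^ k = a ^ k * (a ^ d * b ^ k) := by ring
    _ ≤ a ^ k * (b ^ d * b ^ k) := by gcongr
    _ = a ^ k * b ^ (k + d) := by ring

variable {c : ℕ → R} {n : ℕ} {a b : R}

theorem pow_le_sum_of_le_root (hc : ∀ k, 0 ≤ c k) (ha : 0 ≤ a) (hab : a ≤ b) (hb : 0 < b)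
    (hroot : ∑ k ∈ range n, c k * b ^ k = b ^ n) :
    a ^ n ≤ ∑ k ∈ range n, c k * a ^ k := by
  refine le_of_mul_le_mul_left ?_ (pow_pos hb n)
  calc b ^ n * a ^ n = ∑ k ∈ range n, c k * (a ^ n * b ^ k) := by
        rw [← hroot, sum_mul]
        exact sum_congr rfl fun k _ => by ring
    _ ≤ ∑ k ∈ range n, c k * (a ^ k * b ^ n) := by
        refine sum_le_sum fun k hk => mul_le_mul_of_nonneg_left ?_ (hc k)
        exact pow_mul_pow_le_pow_mul_pow ha hab (mem_range.1 hk).le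
    _ = b ^ n * ∑ k ∈ range n, c k * a ^ k := by
        rw [mul_sum]
        exact sum_congr rfl fun k _ => by ring

theorem sum_le_pow_of_root_le (hc : ∀ k, 0 ≤ c k) (hb : 0 < b) (hba : b ≤ a)
    (hroot : ∑ k ∈ range n, c k * b ^ k = b ^ n) :
    ∑ k ∈ range n, c k * a ^ k ≤ a ^ n := by
  refine le_of_mul_le_mul_left ?_ (pow_pos hb n)
  calc b ^ n * ∑ k ∈ range n, c k * a ^ k = ∑ k ∈ range n, c k * (b ^ n * a ^ k) := by
        rw [mul_sum]
        exact sum_congr rfl fun k _ => by ring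
    _ ≤ ∑ k ∈ range n, c k * (b ^ k * a ^ n) := by
        refine sum_le_sum fun k hk => mul_le_mul_of_nonneg_left ?_ (hc k)
        exact pow_mul_pow_le_pow_mul_pow hb.le hba (mem_range.1 hk).le
    _ = b ^ n * a ^ n := by
        rw [← hroot, sum_mul]
        exact sum_congr rfl fun k _ => by ring

theorem lt_root_of_pow_lt_sum (hc : ∀ k, 0 ≤ c k) (hb : 0 < b)
    (hroot : ∑ k ∈ range n, c k * b ^ k = b ^ n) (h : a ^ n < ∑ k ∈ range n, c k * a ^ k) :
    a < b := by
  by_contra! hba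
  exact (sum_le_pow_of_root_le hc hb hba hroot).not_gt h

theorem root_lt_of_sum_lt_pow (hc : ∀ k, 0 ≤ c k) (ha : 0 ≤ a) (hb : 0 < b)
    (hroot : ∑ k ∈ range n, c k * b ^ k = b ^ n) (h : ∑ k ∈ range n, c k * a ^ k < a ^ n) :
    b < a := by
  by_contra! hab
  exact (pow_le_sum_of_le_root hc ha hab hb hroot).not_gt h

end RootComparison

theorem Nat.factorial_mul_succ_pow_lt {k n : ℕ} (hkn : k < n) :
    n ! * (n + 1) ^ k < k ! * (n + 1) ^ n := by
  have hdesc : n.descFactorial (n - k) < (n + 1) ^ (n - k) :=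
    (n.descFactorial_le_pow _).trans_lt (Nat.pow_lt_pow_left n.lt_succ_self (by omega))
  calc n ! * (n + 1) ^ k = k ! * n.descFactorial (n - k) * (n + 1) ^ k := by
        rw [← Nat.factorial_mul_descFactorial (Nat.sub_le n k), Nat.sub_sub_self hkn.le]
    _ < k ! * (n + 1) ^ (n - k) * (n + 1) ^ k := by gcongr
    _ = k ! * (n + 1) ^ n := by rw [mul_assoc, ← pow_add, Nat.sub_add_cancel hkn.le]

noncomputable def alphaCoeff (K k : ℕ) : ℝ := (K - 1)! / k !

theorem alphaCoeff_nonneg (K k : ℕ) : 0 ≤ alphaCoeff K k := by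
  unfold alphaCoeff; positivity

theorem sum_alphaCoeff_mul_pow_lt {K : ℕ} (hK : 2 ≤ K) :
    ∑ k ∈ range K, alphaCoeff K k * (K : ℝ) ^ k < (K : ℝ) ^ K := by
  obtain ⟨n, rfl⟩ : ∃ n, K = n + 1 := ⟨K - 1, by omega⟩
  have hterm : ∀ k ∈ range n, alphaCoeff (n + 1) k * ((n + 1 : ℕ) : ℝ) ^ k
      < ((n + 1 : ℕ) : ℝ) ^ n := by
    intro k hk
    rw [alphaCoeff, Nat.add_sub_cancel, div_mul_eq_mul_div, div_lt_iff₀ (by positivity)]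
    exact_mod_cast (Nat.factorial_mul_succ_pow_lt (mem_range.1 hk)).trans_eq (mul_comm _ _)
  have hlast : alphaCoeff (n + 1) n = 1 := by
    rw [alphaCoeff, Nat.add_sub_cancel, div_self (by positivity)]
  calc ∑ k ∈ range (n + 1), alphaCoeff (n + 1) k * ((n + 1 : ℕ) : ℝ) ^ k
      < ∑ _k ∈ range n, ((n + 1 : ℕ) : ℝ) ^ n + ((n + 1 : ℕ) : ℝ) ^ n := by
        rw [sum_range_succ, hlast, one_mul]
        exact add_lt_add_left (sum_lt_sum_of_nonempty (nonempty_range_iff.2 (by omega)) hterm) _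
    _ = ((n + 1 : ℕ) : ℝ) ^ (n + 1) := by
        rw [sum_const, card_range, nsmul_eq_mul, pow_succ]
        push_cast
        ring

theorem sum_alphaCoeff_succ {K : ℕ} (hK : 1 ≤ K) (x : ℝ) :
    ∑ k ∈ range (K + 1), alphaCoeff (K + 1) k * x ^ k
      = K * ∑ k ∈ range K, alphaCoeff K k * x ^ k + x ^ K := by
  obtain ⟨n, rfl⟩ : ∃ n, K = n + 1 := ⟨K - 1, by omega⟩
  rw [sum_range_succ, mul_sum]
  congr 1
  · refine sum_congr rfl fun k _ => ?_
    simp only [alphaCoeff, Nat.add_sub_cancel, Nat.factorial_succ]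
    push_cast
    ring
  · rw [alphaCoeff, Nat.add_sub_cancel, div_self (by positivity), one_mul]

/-- the sequence `α_K`, the unique positive root of
`∑_{k=0}^{K-1} (K-1)! α^k/k! = α^K`, is strictly increasing in `K` and
satisfies `α_K < K` for `K ≥ 2`. -/
theorem stmt18 (α : ℕ → ℝ)
    (hα : ∀ K : ℕ, 1 ≤ K → 0 < α K ∧
      ∑ k ∈ Finset.range K, (Nat.factorial (K - 1) : ℝ) * (α K) ^ k / (Nat.factorial k : ℝ)
        = (α K) ^ K) :
    (∀ K : ℕ, 1 ≤ K → α K < α (K + 1)) ∧ (∀ K : ℕ, 2 ≤ K → α K < (K : ℝ)) := by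
  have hroot : ∀ K, 1 ≤ K → ∑ k ∈ range K, alphaCoeff K k * α K ^ k = α K ^ K := fun K hK => by
    simpa only [alphaCoeff, mul_div_right_comm] using (hα K hK).2
  have hlt : ∀ K : ℕ, 2 ≤ K → α K < K := fun K hK =>
    root_lt_of_sum_lt_pow (alphaCoeff_nonneg K) K.cast_nonneg (hα K (by omega)).1
      (hroot K (by omega)) (sum_alphaCoeff_mul_pow_lt hK)
  refine ⟨fun K hK => ?_, hlt⟩
  have hαK : α K < K + 1 := by
    rcases hK.eq_or_lt with rfl | hK
    · have h1 := hroot 1 le_rfl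
      norm_num [alphaCoeff] at h1
      norm_num [← h1]
    · linarith [hlt K hK]
  refine lt_root_of_pow_lt_sum (alphaCoeff_nonneg (K + 1)) (hα (K + 1) (by omega)).1
    (hroot (K + 1) (by omega)) ?_
  rw [sum_alphaCoeff_succ hK, hroot K hK, pow_succ]
  linarith [mul_lt_mul_of_pos_left hαK (pow_pos (hα K hK).1 K)]
end
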